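/- arXiv:1703.08094 — 3 statements merged into one kernel-verified Lean document; each statement's English description precedes it below -/
import Mathlib

section
/- Let M be a category with finite coproducts and equalizers, and consider the trivial weak factorization system (all morphisms, isomorphisms) on M. This weak factorization system has a generator (a set X of morphisms with X^□ equal to the class of isomorphisms) if and only if M has a strong generator. Explicitly: if A is a strong generator, then the set X consisting of the morphisms 0 → A (from an initial object) and the codiagonals A ⊔ A → A for A ∈ A is a generator for the isomorphisms; conversely, if X is a generator for the isomorphisms, then the set of domains and codomains of morphisms in X is a strong generator. -/
universe w v u v₁ u₁ v₂ u₂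

open CategoryTheory Limits Opposite

namespace Paper

variable {M : Type u} [Category.{v} M]

/-! ### Lifting properties, weak factorization systems -/

/-- The class of morphisms with the right lifting property against a set of arrows. -/
def rlpSet (X : Set (Arrow M)) : MorphismProperty M :=
  fun _ _ f => ∀ a ∈ X, HasLiftingProperty a.hom f

/-- The right lifting property class of a class of morphisms. -/
def rlpC (L : MorphismProperty M) : MorphismProperty M :=
  fun _ _ f => ∀ ⦃A B : M⦄ (g : A ⟶ B), L g → HasLiftingProperty g f

/-- The left lifting property class of a class of morphisms. -/
def llpC (R : MorphismProperty M) : MorphismProperty M :=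
  fun _ _ f => ∀ ⦃A B : M⦄ (g : A ⟶ B), R g → HasLiftingProperty f g

/-- A weak factorization system `(L, R)`. -/
structure IsWFS (L R : MorphismProperty M) : Prop where
  rlp_eq : rlpC L = R
  llp_eq : llpC R = L
  factorization : ∀ ⦃A B : M⦄ (f : A ⟶ B),
    ∃ (Z : M) (i : A ⟶ Z) (p : Z ⟶ B), L i ∧ R p ∧ i ≫ p = f

/-! ### Posets, smooth and good diagrams -/

/-- `a` is the predecessor of `b`; equivalently `b` is isolated with predecessor `a`. -/
def IsSuccOf {P : Type w} [PartialOrder P] (a b : P) : Prop :=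
  a < b ∧ ∀ c : P, c < b → c ≤ a

/-- A limit element of a good poset: not the least element and not isolated. -/
def IsLimitElem {P : Type w} [PartialOrder P] [OrderBot P] (b : P) : Prop :=
  b ≠ ⊥ ∧ ¬ ∃ a : P, IsSuccOf a b

/-- A preorder is `κ`-directed if every subset of cardinality `< κ` has an upper bound. -/
def CardDirected (κ : Cardinal.{w}) (P : Type w) [Preorder P] : Prop :=
  ∀ s : Set P, Cardinal.mk s < κ → ∃ b : P, ∀ x ∈ s, x ≤ b

/-- A category is `κ`-filtered if every diagram indexed by a category with fewer
than `κ` morphisms admits a cocone. -/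
def CardFiltered (κ : Cardinal.{v}) (J : Type u₁) [Category.{v₁} J] : Prop :=
  ∀ (A : Type v) [SmallCategory A], Cardinal.mk (Arrow A) < κ →
    ∀ F : A ⥤ J, Nonempty (Cocone F)

section Smooth

variable {P : Type w} [PartialOrder P] (D : P ⥤ M)

/-- Restriction of a diagram to the initial segment `{y | y < b}`. -/
def restrictIio (b : P) : {y : P // y < b} ⥤ M :=
  Monotone.functor (f := fun y : {y : P // y < b} => (y : P)) (fun _ _ h => h) ⋙ D

/-- The canonical cocone on the restriction of `D` to `{y | y < b}` with point `D.obj b`. -/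
def iioCocone (b : P) : Cocone (restrictIio D b) where
  pt := D.obj b
  ι :=
    { app := fun y => D.map (homOfLE y.2.le)
      naturality := fun y z f => by
        dsimp [restrictIio, Monotone.functor]
        rw [Category.comp_id, ← D.map_comp]
        rfl }

/-- A diagram over a poset with a least element is smooth if at every limit element the
canonical cocone of the restriction to the strict initial segment is a colimit cocone. -/
def IsSmooth [OrderBot P] : Prop :=
  ∀ b : P, IsLimitElem b → Nonempty (IsColimit (iioCocone D b))

end Smooth

/-! ### Cellular morphisms and cofibrations -/

/-- `Q` contains the set of arrows `X`. -/
def ContainsX (X : Set (Arrow M)) (Q : MorphismProperty M) : Prop :=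
  ∀ a ∈ X, Q a.hom

/-- `Q` is stable under pushouts of morphisms in `X` along arbitrary morphisms. -/
def StableUnderPushoutsOf (X : Set (Arrow M)) (Q : MorphismProperty M) : Prop :=
  ∀ ⦃A B A' B' : M⦄ (u : A ⟶ A') (f : A ⟶ B) (g : A' ⟶ B') (v : B ⟶ B'),
    Arrow.mk f ∈ X → IsPushout u f g v → Q g

/-- `Q` is stable under transfinite compositions: for every smooth diagram over a
well-ordered set with least element, all of whose links lie in `Q`, the composite
(the component at `⊥` of any colimit cocone) lies in `Q`. -/
def StableUnderTransfiniteComposition (Q : MorphismProperty M) : Prop :=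
  ∀ (β : Type v) [LinearOrder β] [OrderBot β], WellFoundedLT β →
    ∀ (D : β ⥤ M), IsSmooth D →
      (∀ (a b : β) (h : IsSuccOf a b), Q (D.map (homOfLE h.1.le))) →
      ∀ (c : Cocone D), IsColimit c → Q (c.ι.app ⊥)

/-- `Q` is stable under retracts (in the arrow category). -/
def IsRetractOf {A B A' B' : M} (f : A ⟶ B) (g : A' ⟶ B') : Prop :=
  ∃ (iA : A ⟶ A') (rA : A' ⟶ A) (iB : B ⟶ B') (rB : B' ⟶ B),
    iA ≫ rA = 𝟙 A ∧ iB ≫ rB = 𝟙 B ∧ iA ≫ g = f ≫ iB ∧ rA ≫ f = g ≫ rB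

def StableUnderRetracts (Q : MorphismProperty M) : Prop :=
  ∀ ⦃A B A' B' : M⦄ (f : A ⟶ B) (g : A' ⟶ B'), IsRetractOf f g → Q g → Q f

/-- `Q` contains `X` and is closed under pushouts along `X` and transfinite compositions. -/
def IsCellClosed (X : Set (Arrow M)) (Q : MorphismProperty M) : Prop :=
  ContainsX X Q ∧ StableUnderPushoutsOf X Q ∧ StableUnderTransfiniteComposition Q

/-- The class of `X`-cellular morphisms: the smallest class containing `X` closed under
pushouts along morphisms of `X` and transfinite compositions. -/
def cellP (X : Set (Arrow M)) : MorphismProperty M :=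
  fun _ _ f => ∀ Q : MorphismProperty M, IsCellClosed X Q → Q f

/-- The class of `X`-cofibrations: the smallest class containing `X` closed under
pushouts along morphisms of `X`, transfinite compositions and retracts. -/
def cofP (X : Set (Arrow M)) : MorphismProperty M :=
  fun _ _ f => ∀ Q : MorphismProperty M, IsCellClosed X Q → StableUnderRetracts Q → Q f

/-! ### Smallness and presentability -/

/-- `Hom(A, -)` maps the colimit cocone `c` to a colimit cocone in types. -/
def CoyonedaPreserves (A : M) {J : Type u₁} [Category.{v₁} J] (D : J ⥤ M) (c : Cocone D) :
    Prop :=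
  Nonempty (IsColimit ((coyoneda.obj (op A)).mapCocone c))

/-- `A` is `κ`-small relative to `X`: `Hom(A, -)` preserves colimits of smooth κ-directed
well-ordered chains whose links are `X`-cellular. -/
def SmallRel (κ : Cardinal.{v}) (X : Set (Arrow M)) (A : M) : Prop :=
  ∀ (P : Type v) [LinearOrder P] [OrderBot P], WellFoundedLT P → CardDirected κ P →
    ∀ (D : P ⥤ M), IsSmooth D →
      (∀ (a b : P) (h : IsSuccOf a b), cellP X (D.map (homOfLE h.1.le))) →
      ∀ (c : Cocone D), IsColimit c → CoyonedaPreserves A D c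

/-- `A` is strictly `κ`-small relative to `X`: `Hom(A, -)` preserves colimits of κ-directed
good (smooth, well-founded with bottom) diagrams whose links are `X`-cellular. -/
def StrictlySmallRel (κ : Cardinal.{v}) (X : Set (Arrow M)) (A : M) : Prop :=
  ∀ (P : Type v) [PartialOrder P] [OrderBot P], WellFoundedLT P → CardDirected κ P →
    ∀ (D : P ⥤ M), IsSmooth D →
      (∀ (a b : P) (h : IsSuccOf a b), cellP X (D.map (homOfLE h.1.le))) →
      ∀ (c : Cocone D), IsColimit c → CoyonedaPreserves A D c

/-- `A` is `κ`-presentable: `Hom(A, -)` preserves `κ`-filtered colimits. -/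
def IsCardinalPresentable (κ : Cardinal.{v}) (A : M) : Prop :=
  ∀ (J : Type v) [SmallCategory J], CardFiltered κ J →
    ∀ (D : J ⥤ M) (c : Cocone D), IsColimit c → CoyonedaPreserves A D c

/-- `A` is presentable: `κ`-presentable for some regular cardinal `κ`. -/
def IsPresentableObj (A : M) : Prop :=
  ∃ κ : Cardinal.{v}, κ.IsRegular ∧ IsCardinalPresentable κ A

/-! ### Notions of cofibrant generation -/

/-- `X` is a (small) generating set: `X ⊆ L` and `X^□ = R`. -/
structure IsGeneratingSet (L R : MorphismProperty M) (X : Set (Arrow M)) : Prop where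
  small : Small.{v} X
  subset : ∀ a ∈ X, L a.hom
  rlp : rlpSet X = R

def SetwiseCofGen (L R : MorphismProperty M) : Prop :=
  ∃ X : Set (Arrow M), IsGeneratingSet L R X

def WeaklyCofGenBy (L R : MorphismProperty M) (X : Set (Arrow M)) : Prop :=
  IsGeneratingSet L R X ∧ cofP X = L

def CofGenBy (L R : MorphismProperty M) (X : Set (Arrow M)) (κ : Cardinal.{v}) : Prop :=
  IsGeneratingSet L R X ∧ ∀ a ∈ X, SmallRel κ X a.left

def StrictlyCofGenBy (L R : MorphismProperty M) (X : Set (Arrow M)) (κ : Cardinal.{v}) : Prop :=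
  IsGeneratingSet L R X ∧ ∀ a ∈ X, StrictlySmallRel κ X a.left

def SemiPerfectlyCofGenBy (L R : MorphismProperty M) (X : Set (Arrow M)) (κ : Cardinal.{v}) :
    Prop :=
  IsGeneratingSet L R X ∧ ∀ a ∈ X, IsCardinalPresentable κ a.left

def PerfectlyCofGenBy (L R : MorphismProperty M) (X : Set (Arrow M)) (κ : Cardinal.{v}) : Prop :=
  SemiPerfectlyCofGenBy L R X κ ∧ ∀ a ∈ X, IsCardinalPresentable κ a.right

def CofGen (L R : MorphismProperty M) : Prop :=
  ∃ (X : Set (Arrow M)) (κ : Cardinal.{v}), κ.IsRegular ∧ CofGenBy L R X κ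

def StrictlyCofGen (L R : MorphismProperty M) : Prop :=
  ∃ (X : Set (Arrow M)) (κ : Cardinal.{v}), κ.IsRegular ∧ StrictlyCofGenBy L R X κ

def SemiPerfectlyCofGen (L R : MorphismProperty M) : Prop :=
  ∃ (X : Set (Arrow M)) (κ : Cardinal.{v}), κ.IsRegular ∧ SemiPerfectlyCofGenBy L R X κ

def PerfectlyCofGen (L R : MorphismProperty M) : Prop :=
  ∃ (X : Set (Arrow M)) (κ : Cardinal.{v}), κ.IsRegular ∧ PerfectlyCofGenBy L R X κ

/-! ### Cofibrant objects -/

/-- `A` is `L`-cofibrant: the morphism from an initial object to `A` lies in `L`. -/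
def CofibrantObj (L : MorphismProperty M) (A : M) : Prop :=
  ∀ ⦃I : M⦄ (hI : IsInitial I), L (hI.to A)

/-- `A` is `R`-fibrant: the morphism from `A` to a terminal object lies in `R`. -/
def FibrantObj (R : MorphismProperty M) (A : M) : Prop :=
  ∀ ⦃T : M⦄ (hT : IsTerminal T), R (hT.from A)

/-- A set of objects closed under `λ`-small colimits (diagrams with fewer than `λ` morphisms). -/
def ClosedUnderColimitsCard (lam : Cardinal.{v}) (S : Set M) : Prop :=
  ∀ (J : Type v) [SmallCategory J], Cardinal.mk (Arrow J) < lam →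
    ∀ (D : J ⥤ M) (c : Cocone D), IsColimit c → (∀ j, D.obj j ∈ S) → c.pt ∈ S

/-- The smallest class of objects containing the domains and codomains of `X` and closed
under `λ`-small colimits in `M`. -/
def Atilde (X : Set (Arrow M)) (lam : Cardinal.{v}) : Set M :=
  { m | ∀ S : Set M, (∀ a ∈ X, a.left ∈ S ∧ a.right ∈ S) →
      ClosedUnderColimitsCard lam S → m ∈ S }

/-- `A(X, λ)`: the intersection of `Atilde X λ` with the cofibrant objects. -/
def Aset (L : MorphismProperty M) (X : Set (Arrow M)) (lam : Cardinal.{v}) : Set M :=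
  { m | m ∈ Atilde X lam ∧ CofibrantObj L m }

/-- A set of objects is essentially small. -/
def EssentiallySmallSet (S : Set M) : Prop :=
  ∃ T : Set M, Small.{v} T ∧ T ⊆ S ∧ ∀ m ∈ S, ∃ t ∈ T, Nonempty (m ≅ t)

/-- `A` is a `λ`-filtered colimit (in `M`) of objects from `S`. -/
def IsCardFilteredColimitOf (lam : Cardinal.{v}) (S : Set M) (A : M) : Prop :=
  ∃ J : Cat.{v, v}, CardFiltered lam J ∧
    ∃ D : J ⥤ M, (∀ j, D.obj j ∈ S) ∧ ∃ c : Cocone D, Nonempty (IsColimit c) ∧ c.pt = A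

/-! ### Preaccessible and locally presentable categories -/

def PreaccessibleAt (lam : Cardinal.{v}) (C : Type u₁) [Category.{v} C] : Prop :=
  ∃ A : Set C, Small.{v} A ∧ (∀ a ∈ A, IsCardinalPresentable lam a) ∧
    ∀ X : C, IsCardFilteredColimitOf lam A X

def Preaccessible (C : Type u₁) [Category.{v} C] : Prop :=
  ∃ lam : Cardinal.{v}, lam.IsRegular ∧ PreaccessibleAt lam C

def LocallyPresentable (C : Type u₁) [Category.{v} C] : Prop :=
  HasColimitsOfSize.{v, v} C ∧ Preaccessible C

/-! ### Vopěnka's principle -/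

/-- A graph: a type with a binary relation. -/
structure Graph : Type (v + 1) where
  V : Type v
  E : V → V → Prop

/-- A homomorphism of graphs. -/
structure GraphHom (G H : Graph.{v}) : Type v where
  toFun : G.V → H.V
  map : ∀ {a b : G.V}, G.E a b → H.E (toFun a) (toFun b)

/-- Vopěnka's principle: for every ordinal-indexed family of graphs there exist two distinct
indices and a homomorphism between the corresponding graphs; equivalently, the category of
graphs has no large discrete full subcategory. -/
def VopenkaPrinciple : Prop :=
  ∀ G : Ordinal.{v} → Graph.{v}, ∃ i j : Ordinal.{v}, i ≠ j ∧ Nonempty (GraphHom (G i) (G j))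


/-- A set of objects `A` is a strong generator: any morphism `f` such that `Hom(G, f)` is
bijective for all `G ∈ A` is an isomorphism. -/
def IsStrongGenerator {M : Type u} [Category.{v} M] (A : Set M) : Prop :=
  ∀ ⦃X Y : M⦄ (f : X ⟶ Y),
    (∀ G ∈ A, Function.Bijective (fun g : G ⟶ X => g ≫ f)) → IsIso f

/-- The set of morphisms `0 ⟶ G` and `G ⊔ G ⟶ G` (codiagonals) for `G ∈ A`. -/
def genX {M : Type u} [Category.{v} M] [HasInitial M] [HasBinaryCoproducts M]
    (A : Set M) : Set (Arrow M) :=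
  { a | ∃ G ∈ A, a = Arrow.mk (initial.to G) } ∪
  { a | ∃ G ∈ A, a = Arrow.mk (coprod.desc (𝟙 G) (𝟙 G)) }

/-- The set of domains and codomains of a set of arrows. -/
def domCod {M : Type u} [Category.{v} M] (X : Set (Arrow M)) : Set M :=
  { m | ∃ a ∈ X, a.left = m ∨ a.right = m }

/-- Let `M` be a category with finite coproducts and equalizers. The trivial
weak factorization system `(all morphisms, isomorphisms)` has a generator (a set of morphisms
`X` with `X^□` the isomorphisms) iff `M` has a strong generator.  Explicitly: if `A` is a
strong generator then the set of morphisms `0 ⟶ G` and `G ⊔ G ⟶ G` for `G ∈ A` is a generator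
for the isomorphisms; conversely, if `X` is a generator for the isomorphisms then the set of
domains and codomains of the morphisms of `X` is a strong generator. -/
theorem statement1 {M : Type u} [Category.{v} M] [HasFiniteCoproducts M] [HasEqualizers M] :
    ((∃ X : Set (Arrow M), Small.{v} X ∧ rlpSet X = MorphismProperty.isomorphisms M) ↔
      (∃ A : Set M, Small.{v} A ∧ IsStrongGenerator A)) ∧
    (∀ A : Set M, IsStrongGenerator A →
      rlpSet (genX A) = MorphismProperty.isomorphisms M) ∧
    (∀ X : Set (Arrow M), rlpSet X = MorphismProperty.isomorphisms M →
      IsStrongGenerator (domCod X)) := by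
  classical
  have part2 : ∀ A : Set M, IsStrongGenerator A →
      rlpSet (genX A) = MorphismProperty.isomorphisms M := by
    intro A hA
    ext X Y f
    constructor
    · intro hf
      apply hA
      intro G hG
      constructor
      · intro g₁ g₂ hg
        simp only at hg
        have h1 : HasLiftingProperty (coprod.desc (𝟙 G) (𝟙 G)) f :=
          hf _ (Or.inr ⟨G, hG, rfl⟩)
        have sq : CommSq (coprod.desc g₁ g₂) (coprod.desc (𝟙 G) (𝟙 G)) f (g₁ ≫ f) :=
          ⟨by apply coprod.hom_ext <;> simp [hg]⟩
        have hfac := sq.fac_left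
        have h₁ : coprod.inl ≫ coprod.desc g₁ g₂ = coprod.inr ≫ coprod.desc g₁ g₂ := by
          rw [← hfac]
          simp only [coprod.inl_desc_assoc, coprod.inr_desc_assoc]
        simp only [coprod.inl_desc, coprod.inr_desc] at h₁
        exact h₁
      · intro g
        have h1 : HasLiftingProperty (initial.to G) f :=
          hf _ (Or.inl ⟨G, hG, rfl⟩)
        have sq : CommSq (initial.to X) (initial.to G) f g :=
          ⟨by apply initial.hom_ext⟩
        exact ⟨sq.lift, sq.fac_right⟩
    · intro hf a _
      have : IsIso f := hf
      infer_instance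
  have part3 : ∀ X : Set (Arrow M), rlpSet X = MorphismProperty.isomorphisms M →
      IsStrongGenerator (domCod X) := by
    intro X hX A B f hbij
    have hf : rlpSet X f := by
      intro a ha
      constructor
      intro u v sq
      obtain ⟨l, hl⟩ := (hbij a.right ⟨a, ha, Or.inr rfl⟩).2 v
      simp only at hl
      have hul : a.hom ≫ l = u := by
        apply (hbij a.left ⟨a, ha, Or.inl rfl⟩).1
        simp only [Category.assoc, hl]
        exact sq.w.symm
      exact ⟨⟨⟨l, hul, hl⟩⟩⟩
    rw [hX] at hf
    exact hf
  refine ⟨⟨?_, ?_⟩, part2, part3⟩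
  · rintro ⟨X, hsmall, hX⟩
    refine ⟨domCod X, ?_, part3 X hX⟩
    have : Function.Surjective (fun p : ↥X ⊕ ↥X => match p with
      | Sum.inl a => (⟨a.1.left, a.1, a.2, Or.inl rfl⟩ : domCod X)
      | Sum.inr a => (⟨a.1.right, a.1, a.2, Or.inr rfl⟩ : domCod X)) := by
      rintro ⟨m, a, ha, h | h⟩
      · exact ⟨Sum.inl ⟨a, ha⟩, Subtype.ext h⟩
      · exact ⟨Sum.inr ⟨a, ha⟩, Subtype.ext h⟩
    exact small_of_surjective this
  · rintro ⟨A, hsmall, hA⟩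
    refine ⟨genX A, ?_, part2 A hA⟩
    have : Function.Surjective (fun p : ↥A ⊕ ↥A => match p with
      | Sum.inl G => (⟨Arrow.mk (initial.to G.1), Or.inl ⟨G.1, G.2, rfl⟩⟩ : genX A)
      | Sum.inr G => (⟨Arrow.mk (coprod.desc (𝟙 G.1) (𝟙 G.1)), Or.inr ⟨G.1, G.2, rfl⟩⟩ : genX A)) := by
      rintro ⟨a, ⟨G, hG, rfl⟩ | ⟨G, hG, rfl⟩⟩
      · exact ⟨Sum.inl ⟨G, hG⟩, rfl⟩
      · exact ⟨Sum.inr ⟨G, hG⟩, rfl⟩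
    exact small_of_surjective this


end Paper
end

section
/- For every regular cardinal λ, the one-point space is not a λ-presentable object of the category of compact Hausdorff spaces. Consequently, the empty space is the only presentable object of the category of compact Hausdorff spaces. -/
universe w v u v₁ u₁ v₂ u₂

open CategoryTheory Limits Opposite

namespace Paper

variable {M : Type u} [Category.{v} M]

/-- The one-point compact Hausdorff space. -/
def chPoint : CompHaus.{u} := CompHaus.of PUnit.{u + 1}

/-- The empty compact Hausdorff space. -/
def chEmpty : CompHaus.{u} := CompHaus.of PEmpty.{u + 1}

/-! Write `β` for the ultrafilter space functor `Type ⥤ CompHaus`. For a regular cardinal `κ`,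
the well-order `κ` is the `κ`-filtered colimit of its initial segments `Iic j`, and `β`, a left
adjoint, turns this into a colimit `β κ = colim_j β (Iic j)`. Each `Iic j` has fewer than `κ`
elements, so an ultrafilter on `κ` extending the co-small sets contains none of them: as a point
of `β κ` it lies in the image of no stage. Hence no constant map from a nonempty `X` into `β κ`
factors through a stage, and `X` is not `κ`-presentable. The empty space is initial, and `Hom`
out of an initial object is constantly a singleton, so it preserves all colimits over connected,
in particular filtered, categories. -/

section ChainOfInitialSegments

variable (α : Type w) [Preorder α]

def iicDiagram : α ⥤ Type w where
  obj j := Set.Iic j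
  map f := TypeCat.ofHom fun x => ⟨x.1, x.2.trans (leOfHom f)⟩

def iicCocone : Cocone (iicDiagram α) where
  pt := α
  ι := { app := fun _ => TypeCat.ofHom Subtype.val }

def isColimitIicCocone : IsColimit (iicCocone α) where
  desc s := TypeCat.ofHom fun p => s.ι.app p ⟨p, le_rfl⟩
  fac s j := by
    ext x
    exact (ConcreteCategory.congr_hom (s.ι.naturality (homOfLE x.2)) ⟨x.1, le_rfl⟩).symm
  uniq s m hm := by
    ext p
    exact ConcreteCategory.congr_hom (hm p) ⟨p, le_rfl⟩

end ChainOfInitialSegments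

lemma cardFiltered_of_le_cof {κ : Cardinal.{v}} {α : Type v} [LinearOrder α]
    (hκ : κ ≤ Order.cof α) : CardFiltered κ α := by
  intro A _ hA F
  have hA' : Cardinal.mk A < κ := (hasCardinalLT_iff_cardinal_mk_lt _ _).1
    (hasCardinalLT_of_hasCardinalLT_arrow ((hasCardinalLT_iff_cardinal_mk_lt _ _).2 hA))
  have hbdd : ¬ IsCofinal (Set.range F.obj) := fun h =>
    (Cardinal.mk_range_le.trans_lt (hA'.trans_le hκ)).not_ge (Order.cof_le h)
  obtain ⟨b, hb⟩ := not_isCofinal_iff.1 hbdd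
  exact ⟨{ pt := b
           ι := { app := fun a => homOfLE (hb _ ⟨a, rfl⟩).le } }⟩

lemma CardFiltered.isFiltered {κ : Cardinal.{v}} (hκ : Cardinal.aleph0 ≤ κ) {J : Type u₁}
    [Category.{v₁} J] (hJ : CardFiltered κ J) : IsFiltered J :=
  IsFiltered.of_cocone_nonempty.{v} J fun F =>
    hJ _ ((Cardinal.lt_aleph0_of_finite _).trans_le hκ) F

lemma coyonedaPreserves_of_isInitial {A : M} (hA : IsInitial A) {J : Type u₁} [Category.{v₁} J]
    [IsConnected J] (D : J ⥤ M) (c : Cocone D) : CoyonedaPreserves A D c := by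
  let j₀ := Classical.arbitrary J
  refine ⟨{ desc := fun s => TypeCat.ofHom fun _ => s.ι.app j₀ (hA.to (D.obj j₀)),
            fac := fun s j => ?_, uniq := fun s m hm => ?_ }⟩
  · ext g
    obtain rfl := hA.hom_ext g (hA.to _)
    refine (constant_of_preserves_morphisms (fun j => s.ι.app j (hA.to (D.obj j)))
      (fun j₁ j₂ f => ?_) j j₀).symm
    rw [← hA.hom_ext (hA.to _ ≫ D.map f) (hA.to _)]
    exact (ConcreteCategory.congr_hom (s.ι.naturality f) _).symm
  · ext f
    obtain rfl := hA.hom_ext f (hA.to (D.obj j₀) ≫ c.ι.app j₀)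
    exact ConcreteCategory.congr_hom (hm j₀) _

lemma isPresentableObj_of_isInitial {A : M} (hA : IsInitial A) : IsPresentableObj A := by
  refine ⟨Cardinal.aleph0, Cardinal.isRegular_aleph0, fun J _ hJ D c _ => ?_⟩
  have := hJ.isFiltered le_rfl
  have := IsFiltered.isConnected J
  exact coyonedaPreserves_of_isInitial hA D c

def isInitialChEmpty : IsInitial chEmpty.{u} :=
  IsInitial.ofUniqueHom
    (fun _ => CompHausLike.ofHom _ ⟨PEmpty.elim, continuous_of_discreteTopology⟩)
    (fun _ _ => by ext x; exact x.elim)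

noncomputable abbrev ultrafilterCompHaus : Type u ⥤ CompHaus.{u} :=
  Compactum.free ⋙ compactumToCompHaus

instance : PreservesColimitsOfSize.{u, u} ultrafilterCompHaus.{u} := by
  have := Compactum.adj.leftAdjoint_preservesColimits
  infer_instance

lemma exists_ultrafilter_forall_Iic_notMem {κ : Cardinal.{u}} (hκ : κ.IsRegular) :
    ∃ U : Ultrafilter κ.ord.ToType, ∀ j, Set.Iic j ∉ U := by
  have : (Filter.cocardinal κ.ord.ToType hκ).NeBot := by
    simpa using (Filter.cocardinal_inf_principal_neBot_iff (s := Set.univ)).2 (by simp)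
  refine ⟨.of (Filter.cocardinal _ hκ), fun j => Ultrafilter.compl_mem_iff_notMem.1 ?_⟩
  refine Ultrafilter.of_le _ (Filter.compl_mem_cocardinal_of_card_lt ?_)
  simpa using Cardinal.mk_Iic_lt j (by simp) (by simpa using hκ.aleph0_le)

lemma not_isCardinalPresentable_of_nonempty {κ : Cardinal.{u}} (hκ : κ.IsRegular)
    (X : CompHaus.{u}) [Nonempty X] : ¬ IsCardinalPresentable κ X := by
  intro hX
  obtain ⟨U, hU⟩ := exists_ultrafilter_forall_Iic_notMem hκ
  obtain ⟨hc⟩ := hX _ (cardFiltered_of_le_cof (by simp [Ordinal.cof_toType, hκ.cof_ord]))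
    _ _ (isColimitOfPreserves ultrafilterCompHaus (isColimitIicCocone κ.ord.ToType))
  obtain ⟨j, y, hy⟩ := Types.jointly_surjective _ hc
    (CompHausLike.ofHom _ ⟨fun _ => U, continuous_const⟩ : X ⟶ ultrafilterCompHaus.obj _)
  obtain ⟨x⟩ := ‹Nonempty X›
  let V : Ultrafilter (Set.Iic j) := ConcreteCategory.hom (y : X ⟶ ultrafilterCompHaus.obj _) x
  have hV : V.map Subtype.val = U := congrArg (fun f : X ⟶ _ => ConcreteCategory.hom f x) hy
  apply hU j
  rw [← hV, Ultrafilter.mem_map, Subtype.coe_preimage_self]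
  exact Filter.univ_mem

/-- For every regular cardinal `λ`, the one-point space is not a
`λ`-presentable object of the category of compact Hausdorff spaces.  Consequently, the empty
space is the only presentable object of the category of compact Hausdorff spaces. -/
theorem statement3 :
    (∀ κ : Cardinal.{u}, κ.IsRegular → ¬ IsCardinalPresentable κ chPoint.{u}) ∧
    IsPresentableObj chEmpty.{u} ∧
    (∀ X : CompHaus.{u}, IsPresentableObj X → IsEmpty X) := by
  have : Nonempty chPoint.{u} := inferInstanceAs (Nonempty PUnit)
  refine ⟨fun κ hκ => not_isCardinalPresentable_of_nonempty hκ chPoint,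
    isPresentableObj_of_isInitial isInitialChEmpty, fun X ⟨κ, hκ, hX⟩ =>
      (isEmpty_or_nonempty X).resolve_right fun _ =>
        not_isCardinalPresentable_of_nonempty hκ X hX⟩

end Paper
end

section
/- Let κ be a regular cardinal, let M and N be categories admitting κ-filtered colimits, and let (F_i : M → N)_{i ∈ I} be a set-indexed collection of functors preserving κ-filtered colimits. Let B ⊆ M be a full subcategory which is κ-preaccessible in M, and suppose that for every X ∈ B and every i ∈ I the object F_i(X) is presentable in N. Then there are arbitrarily large regular cardinals λ such that for every object X of B that is λ-presentable in M, F_i(X) is λ-presentable in N for every i ∈ I. -/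
universe w v u v₁ u₁ v₂ u₂

open CategoryTheory Limits Opposite

namespace Paper

variable {M : Type u} [Category.{v} M]

/-- `C` admits `κ`-filtered colimits. -/
def HasCardFilteredColimits (κ : Cardinal.{v}) (C : Type u₁) [Category.{v} C] : Prop :=
  ∀ (J : Type v) [SmallCategory J], CardFiltered κ J → HasColimitsOfShape J C

/-- `F` preserves `κ`-filtered colimits. -/
def PreservesCardFilteredColimits (κ : Cardinal.{v}) {C : Type u₁} [Category.{v} C]
    {D : Type u₂} [Category.{v} D] (F : C ⥤ D) : Prop :=
  ∀ (J : Type v) [SmallCategory J], CardFiltered κ J →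
    ∀ (E : J ⥤ C) (c : Cocone E), IsColimit c → Nonempty (IsColimit (F.mapCocone c))

/-- A full subcategory `B ⊆ M` is `κ`-preaccessible in `M`: there is a small set `A ⊆ B` of
`κ`-presentable objects of `M` such that every object of `B` is a `κ`-filtered colimit in
`M` of objects of `A`. -/
def PreaccessibleIn (κ : Cardinal.{v}) {M : Type u} [Category.{v} M] (B : Set M) : Prop :=
  ∃ A : Set M, Small.{v} A ∧ A ⊆ B ∧ (∀ a ∈ A, IsCardinalPresentable κ a) ∧
    ∀ X ∈ B, IsCardFilteredColimitOf κ A X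

end Paper

/-!
A `λ`-presentable object `X = colim_{j ∈ J} D j` of `B` is a retract of a `λ`-small part of
that colimit, provided `λ` is chosen so that every `λ`-small subset of a `κ`-directed poset
lies in a `λ`-small `κ`-directed subset (for instance `λ = (2^θ)⁺` with `κ ≤ θ`, since then
`(2^θ)^κ = 2^θ` bounds the number of `κ`-small subsets of a `λ`-small set). Indeed, after
replacing `J` by a cofinal `κ`-directed poset, `X` is the `λ`-directed colimit over such
subsets `T` of the partial colimits `colim_T D`, so `𝟙 X` factors through one of them.
Then `Fᵢ X` is a retract of `Fᵢ (colim_T D) = colim_T (Fᵢ ∘ D)`, a `λ`-small colimit of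
`λ`-presentable objects once `λ` also exceeds the presentability ranks of the `Fᵢ a`, `a ∈ A`.
-/

namespace Cardinal

open CategoryTheory

/-- Characterization (iv) of `κ` being sharply smaller than `κ'` (see `Cardinal.SharplyLT`). -/
def HasCardinalFilteredHulls (κ κ' : Cardinal.{w}) [Fact κ.IsRegular] : Prop :=
  ∀ (X : Type w) [PartialOrder X] [IsCardinalFiltered X κ] (A : Set X), HasCardinalLT A κ' →
    ∃ B : Set X, A ⊆ B ∧ IsCardinalFiltered B κ ∧ HasCardinalLT B κ'

lemma mk_setCardinalLT_le {κ θ : Cardinal.{w}} (hθ : ℵ₀ ≤ θ) (hκθ : κ ≤ θ) {X : Type w}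
    (hX : #X ≤ 2 ^ θ) : #(CardinalDirectedPoset.SetCardinalLT κ X) ≤ 2 ^ θ :=
  calc #(CardinalDirectedPoset.SetCardinalLT κ X)
      ≤ #{t : Set X // #t ≤ κ} := mk_le_of_injective (f := fun t => ⟨t.1,
          ((hasCardinalLT_iff_cardinal_mk_lt _ _).mp t.2).le⟩) fun _ _ h => by
        simpa [Subtype.ext_iff] using h
    _ ≤ max #X ℵ₀ ^ κ := mk_bounded_set_le X κ
    _ ≤ (2 ^ θ) ^ θ := (power_le_power_right (max_le hX (hθ.trans (cantor θ).le))).trans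
        (power_le_power_left (power_ne_zero _ two_ne_zero) hκθ)
    _ = 2 ^ θ := by rw [← power_mul, mul_eq_self hθ]

lemma isRegular_succ_two_power {θ : Cardinal.{w}} (hθ : ℵ₀ ≤ θ) :
    (Order.succ ((2 : Cardinal) ^ θ)).IsRegular :=
  isRegular_succ (hθ.trans (cantor θ).le)

lemma hasCardinalFilteredHulls_succ_two_power {κ θ : Cardinal.{w}} [Fact κ.IsRegular]
    (hκθ : κ ≤ θ) : HasCardinalFilteredHulls κ (Order.succ (2 ^ θ)) := by
  have hθ : ℵ₀ ≤ θ := (Fact.out : κ.IsRegular).aleph0_le.trans hκθ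
  have : Fact (Order.succ ((2 : Cardinal.{w}) ^ θ)).IsRegular :=
    ⟨isRegular_succ_two_power hθ⟩
  intro X _ _ A hA
  refine SharplyLT.exists_isCardinalFiltered_set_of_exists_cofinal
    (Order.lt_succ_of_le (hκθ.trans (cantor θ).le)) (fun Y hY => ⟨Set.univ, ?_, IsCofinal.univ⟩)
    A hA
  rw [hasCardinalLT_iff_cardinal_mk_lt, Order.lt_succ_iff] at hY ⊢
  exact mk_univ.trans_le (mk_setCardinalLT_le hθ hκθ hY)

lemma exists_regular_hasCardinalFilteredHulls (κ : Cardinal.{w}) [Fact κ.IsRegular] {ι : Type*}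
    [Small.{w} ι] (ρ : ι → Cardinal.{w}) (ν : Cardinal.{w}) :
    ∃ κ' : Cardinal.{w}, κ'.IsRegular ∧ ν ≤ κ' ∧ (∀ i, ρ i ≤ κ') ∧
      HasCardinalFilteredHulls κ κ' := by
  obtain ⟨ρmax, hρmax⟩ := bddAbove_of_small (s := Set.range ρ)
  have hκθ : κ ≤ max (max κ ν) ρmax := le_max_of_le_left (le_max_left _ _)
  have hθ : max (max κ ν) ρmax ≤ Order.succ (2 ^ max (max κ ν) ρmax) :=
    (cantor _).le.trans (Order.le_succ _)
  exact ⟨_, isRegular_succ_two_power ((Fact.out : κ.IsRegular).aleph0_le.trans hκθ),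
    (le_max_of_le_left (le_max_right _ _)).trans hθ,
    fun i => (hρmax ⟨i, rfl⟩).trans ((le_max_right _ _).trans hθ),
    hasCardinalFilteredHulls_succ_two_power hκθ⟩

end Cardinal

-- Applying `S.monotone h` to a membership proof directly leaves a term whose type is only
-- correct after unfolding `≤` on sets to `⊆`, which defeats `rw` and `simp`.
lemma OrderHom.mem_of_le {α P : Type*} [Preorder P] (S : P →o Set α) {p q : P} (h : p ≤ q)
    {a : α} (ha : a ∈ S p) : a ∈ S q :=
  S.monotone h ha

abbrev Set.inclusionFunctor {α : Type*} [Preorder α] (T : Set α) : T ⥤ α :=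
  Monotone.functor (f := ((↑) : T → α)) fun _ _ h => h

lemma hasCardinalLT_arrow_of_hasCardinalLT {T : Type w} [Preorder T] {κ : Cardinal.{w}}
    (hκ : Cardinal.aleph0 ≤ κ) (hT : HasCardinalLT T κ) : HasCardinalLT (Arrow T) κ :=
  (hasCardinalLT_prod' hκ hT hT).of_injective (fun f => (f.left, f.right)) fun f g h => by
    simp only [Prod.mk.injEq] at h
    exact Arrow.ext h.1 h.2 (Subsingleton.elim _ _)

namespace CategoryTheory.Limits

section DirectedCover

variable {C : Type u} [Category.{v} C] {α : Type w} [Preorder α] (D : α ⥤ C)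

abbrev _root_.CategoryTheory.Functor.restrictSet (T : Set α) : T ⥤ C := Set.inclusionFunctor T ⋙ D

variable {P : Type*} [Preorder P] (S : P →o Set α) [∀ p, HasColimit (D.restrictSet (S p))]

noncomputable def partialColimits : P ⥤ C where
  obj p := colimit (D.restrictSet (S p))
  map {p q} h := colimit.desc (D.restrictSet (S p))
    { pt := colimit (D.restrictSet (S q))
      ι :=
        { app := fun a => colimit.ι (D.restrictSet (S q)) ⟨a, S.mem_of_le (leOfHom h) a.2⟩
          naturality := fun a b f => (colimit.w (D.restrictSet (S q)) (homOfLE (show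
              (⟨a, S.mem_of_le (leOfHom h) a.2⟩ : S q) ≤ ⟨b, S.mem_of_le (leOfHom h) b.2⟩
                from leOfHom f))).trans (Category.comp_id _).symm } }
  map_id p := colimit.hom_ext fun a => (colimit.ι_desc _ _).trans (Category.comp_id _).symm
  map_comp {p q r} f g := colimit.hom_ext fun a => by
    rw [colimit.ι_desc, ← Category.assoc, colimit.ι_desc]
    symm
    exact colimit.ι_desc _ _

variable {D S}

namespace partialColimits

noncomputable def ι {p : P} {a : α} (h : a ∈ S p) : D.obj a ⟶ (partialColimits D S).obj p :=
  colimit.ι (D.restrictSet (S p)) ⟨a, h⟩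

lemma hom_ext {p : P} {X : C} {f g : (partialColimits D S).obj p ⟶ X}
    (h : ∀ a (ha : a ∈ S p), ι ha ≫ f = ι ha ≫ g) : f = g :=
  colimit.hom_ext fun a => h a.1 a.2

@[simp]
lemma ι_map {p q : P} (f : p ⟶ q) {a : α} (h : a ∈ S p) :
    ι h ≫ (partialColimits D S).map f = ι (S.mem_of_le (leOfHom f) h) :=
  colimit.ι_desc _ _

@[simp]
lemma ι_map_assoc {p q : P} (f : p ⟶ q) {a : α} (h : a ∈ S p) {X : C}
    (g : (partialColimits D S).obj q ⟶ X) :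
    ι h ≫ (partialColimits D S).map f ≫ g = ι (S.mem_of_le (leOfHom f) h) ≫ g := by
  rw [← Category.assoc, ι_map]

lemma w {p : P} {a b : α} (f : a ⟶ b) (ha : a ∈ S p) (hb : b ∈ S p) :
    D.map f ≫ ι hb = ι ha :=
  colimit.w (D.restrictSet (S p)) (homOfLE (show (⟨a, ha⟩ : S p) ≤ ⟨b, hb⟩ from leOfHom f))

lemma w_assoc {p : P} {a b : α} (f : a ⟶ b) (ha : a ∈ S p) (hb : b ∈ S p) {X : C}
    (g : (partialColimits D S).obj p ⟶ X) : D.map f ≫ ι hb ≫ g = ι ha ≫ g := by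
  rw [← Category.assoc, w]

noncomputable def desc (c : Cocone D) (p : P) : (partialColimits D S).obj p ⟶ c.pt :=
  colimit.desc (D.restrictSet (S p)) (c.whisker (Set.inclusionFunctor (S p)))

@[simp]
lemma ι_desc (c : Cocone D) {p : P} {a : α} (h : a ∈ S p) : ι h ≫ desc c p = c.ι.app a :=
  colimit.ι_desc _ _

@[simp]
lemma ι_desc_assoc (c : Cocone D) {p : P} {a : α} (h : a ∈ S p) {X : C} (g : c.pt ⟶ X) :
    ι h ≫ desc c p ≫ g = c.ι.app a ≫ g := by
  rw [← Category.assoc, ι_desc]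

lemma ι_comp_eq_of_mem [IsDirectedOrder P] (e : Cocone (partialColimits D S))
    {a : α} {p q : P} (hp : a ∈ S p) (hq : a ∈ S q) :
    ι hp ≫ e.ι.app p = ι hq ≫ e.ι.app q := by
  obtain ⟨r, hpr, hqr⟩ := exists_ge_ge p q
  rw [← e.w (homOfLE hpr), ← e.w (homOfLE hqr), ι_map_assoc, ι_map_assoc]

end partialColimits

open partialColimits

noncomputable def partialColimitsCocone (c : Cocone D) : Cocone (partialColimits D S) where
  pt := c.pt
  ι :=
    { app := desc c
      naturality := fun p q h => hom_ext fun a ha => by simp }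

variable (S) in
noncomputable def isColimitPartialColimitsCocone [IsDirectedOrder P] (hS : ∀ a, ∃ p, a ∈ S p)
    {c : Cocone D} (hc : IsColimit c) : IsColimit (partialColimitsCocone (S := S) c) := by
  choose p hp using hS
  have glue_w (e : Cocone (partialColimits D S)) {a b : α} (f : a ⟶ b) :
      D.map f ≫ ι (hp b) ≫ e.ι.app (p b) = ι (hp a) ≫ e.ι.app (p a) := by
    obtain ⟨r, har, hbr⟩ := exists_ge_ge (p a) (p b)
    rw [ι_comp_eq_of_mem e (hp b) (S.mem_of_le hbr (hp b)),
      ι_comp_eq_of_mem e (hp a) (S.mem_of_le har (hp a)), w_assoc]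
  let glue (e : Cocone (partialColimits D S)) : Cocone D :=
    { pt := e.pt
      ι :=
        { app := fun a => ι (hp a) ≫ e.ι.app (p a)
          naturality := fun a b f => by simpa using glue_w e f } }
  exact
    { desc := fun e => hc.desc (glue e)
      fac := fun e q => hom_ext fun a ha =>
        (ι_desc_assoc c ha _).trans ((hc.fac (glue e) a).trans (ι_comp_eq_of_mem e (hp a) ha))
      uniq := fun e m hm => hc.hom_ext fun a =>
        ((ι_desc_assoc c (hp a) m).symm.trans (congrArg (ι (hp a) ≫ ·) (hm (p a)))).trans
          (hc.fac (glue e) a).symm }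

end DirectedCover

end CategoryTheory.Limits

namespace CategoryTheory

open Limits

section Presentable

variable {C : Type u} [Category.{v} C] {κ κ' : Cardinal.{w}} [Fact κ.IsRegular] [Fact κ'.IsRegular]

theorem IsCardinalPresentable.exists_retract_colimit_restrictSet
    (hκκ' : Cardinal.HasCardinalFilteredHulls κ κ') [HasCardinalFilteredColimits C κ]
    {α : Type w} [PartialOrder α] [IsCardinalFiltered α κ] {D : α ⥤ C} {c : Cocone D}
    (hc : IsColimit c) [IsCardinalPresentable c.pt κ'] :
    ∃ T : Set α, IsCardinalFiltered T κ ∧ HasCardinalLT T κ' ∧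
      ∃ c' : Cocone (D.restrictSet T), Nonempty (IsColimit c') ∧ Nonempty (Retract c.pt c'.pt) := by
  let P := {T : Set α // IsCardinalFiltered T κ ∧ HasCardinalLT T κ'}
  let S : P →o Set α := ⟨Subtype.val, fun _ _ h => h⟩
  have (p : P) : HasColimit (D.restrictSet (S p)) := by
    have := p.2.1
    have := HasCardinalFilteredColimits.hasColimitsOfShape (κ := κ) C (S p)
    infer_instance
  have : IsCardinalFiltered P κ' := isCardinalFiltered_preorder _ _ fun K s hK => by
    obtain ⟨B, hB, hBκ, hBκ'⟩ := hκκ' α (⋃ k, (s k).1)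
      (hasCardinalLT_iUnion _ ((hasCardinalLT_iff_cardinal_mk_lt _ _).mpr hK) fun k => (s k).2.2)
    exact ⟨⟨B, hBκ, hBκ'⟩, fun k => (Set.subset_iUnion _ k).trans hB⟩
  have := isFiltered_of_isCardinalFiltered P κ'
  have := IsFiltered.isDirectedOrder P
  have hS (a : α) : ∃ p : P, a ∈ S p := by
    obtain ⟨B, hB, hBκ, hBκ'⟩ := hκκ' α {a}
      (hasCardinalLT_of_finite _ _ (Fact.out : κ'.IsRegular).aleph0_le)
    exact ⟨⟨B, hBκ, hBκ'⟩, hB rfl⟩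
  obtain ⟨p, i, hi⟩ := IsCardinalPresentable.exists_hom_of_isColimit κ'
    (isColimitPartialColimitsCocone S hS hc) (𝟙 c.pt)
  exact ⟨p.1, p.2.1, p.2.2, _, ⟨colimit.isColimit _⟩, ⟨⟨i, partialColimits.desc (S := S) c p, hi⟩⟩⟩

theorem Functor.isCardinalPresentable_obj_pt_of_isColimit
    (hκκ' : Cardinal.HasCardinalFilteredHulls κ κ') [HasCardinalFilteredColimits C κ]
    {E : Type u₂} [Category.{v₂} E] [LocallySmall.{w} E] (F : C ⥤ E) [F.IsCardinalAccessible κ]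
    {J : Type w} [SmallCategory J] [IsCardinalFiltered J κ] {D : J ⥤ C} {c : Cocone D}
    (hc : IsColimit c) [IsCardinalPresentable c.pt κ']
    (hD : ∀ j, IsCardinalPresentable (F.obj (D.obj j)) κ') :
    IsCardinalPresentable (F.obj c.pt) κ' := by
  obtain ⟨α, _, _, Φ, _⟩ := IsCardinalFiltered.exists_cardinal_directed J κ
  have : IsCardinalPresentable (c.whisker Φ).pt κ' :=
    inferInstanceAs (IsCardinalPresentable c.pt κ')
  obtain ⟨T, _, hT, c', ⟨hc'⟩, ⟨r⟩⟩ := IsCardinalPresentable.exists_retract_colimit_restrictSet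
    hκκ' ((Functor.Final.isColimitWhiskerEquiv Φ c).symm hc)
  have (t : T) : IsCardinalPresentable (((Φ ⋙ D).restrictSet T ⋙ F).obj t) κ' := hD _
  have := F.preservesColimitsOfShape_of_isCardinalAccessible κ T
  have : IsCardinalPresentable (F.obj c'.pt) κ' :=
    isCardinalPresentable_of_isColimit _ (isColimitOfPreserves F hc') κ'
    (hasCardinalLT_arrow_of_hasCardinalLT (Fact.out : κ'.IsRegular).aleph0_le hT)
  exact (r.map F).isCardinalPresentable κ'

end Presentable

end CategoryTheory

namespace Paper

lemma cardFiltered_iff_isCardinalFiltered {κ : Cardinal.{v}} [Fact κ.IsRegular] {J : Type u₁}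
    [Category.{v₁} J] : CardFiltered κ J ↔ IsCardinalFiltered J κ := by
  simp only [CardFiltered, ← hasCardinalLT_iff_cardinal_mk_lt]
  exact ⟨fun h => ⟨fun F hA => h _ hA F⟩, fun h A _ hA F => IsCardinalFiltered.nonempty_cocone F hA⟩

lemma CardFiltered.of_le {κ κ' : Cardinal.{v}} (h : κ ≤ κ') {J : Type u₁} [Category.{v₁} J]
    (hJ : CardFiltered κ' J) : CardFiltered κ J :=
  fun A _ hA F => hJ A (hA.trans_le h) F

lemma IsCardinalPresentable.of_le {κ κ' : Cardinal.{v}} (h : κ ≤ κ') {C : Type u₁}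
    [Category.{v} C] {X : C} (hX : IsCardinalPresentable κ X) : IsCardinalPresentable κ' X :=
  fun J _ hJ => hX J (hJ.of_le h)

lemma isCardinalPresentable_iff {κ : Cardinal.{v}} [Fact κ.IsRegular] {C : Type u₁}
    [Category.{v} C] {X : C} :
    IsCardinalPresentable κ X ↔ CategoryTheory.IsCardinalPresentable X κ :=
  ⟨fun h => ⟨fun J _ hJ => ⟨fun {_} =>
      ⟨fun hc => h J (cardFiltered_iff_isCardinalFiltered.mpr hJ) _ _ hc⟩⟩⟩,
    fun _ J _ hJ _ _ hc => by
      have := cardFiltered_iff_isCardinalFiltered.mp hJ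
      have := preservesColimitsOfShape_of_isCardinalPresentable X κ J
      exact ⟨isColimitOfPreserves _ hc⟩⟩

lemma PreservesCardFilteredColimits.isCardinalAccessible {κ : Cardinal.{v}} [Fact κ.IsRegular]
    {C : Type u₁} [Category.{v} C] {D : Type u₂} [Category.{v} D] {F : C ⥤ D}
    (hF : PreservesCardFilteredColimits κ F) : F.IsCardinalAccessible κ :=
  ⟨fun J _ hJ => ⟨fun {_} =>
    ⟨fun hc => hF J (cardFiltered_iff_isCardinalFiltered.mpr hJ) _ _ hc⟩⟩⟩

lemma HasCardFilteredColimits.hasCardinalFilteredColimits {κ : Cardinal.{v}} [Fact κ.IsRegular]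
    {C : Type u₁} [Category.{v} C] (h : HasCardFilteredColimits κ C) :
    HasCardinalFilteredColimits C κ :=
  ⟨fun J _ hJ => h J (cardFiltered_iff_isCardinalFiltered.mpr hJ)⟩

theorem statement10_general {M : Type u} [Category.{v} M] {N : Type u₂} [Category.{v} N]
    (κ : Cardinal.{v}) (hκ : κ.IsRegular)
    (hM : HasCardFilteredColimits κ M)
    {I : Type v} (F : I → (M ⥤ N))
    (hF : ∀ i, PreservesCardFilteredColimits κ (F i))
    (B : Set M) (hB : PreaccessibleIn κ B)
    (hpres : ∀ X ∈ B, ∀ i, IsPresentableObj ((F i).obj X)) :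
    ∀ ν : Cardinal.{v}, ∃ lam : Cardinal.{v}, ν ≤ lam ∧ lam.IsRegular ∧
      ∀ X ∈ B, IsCardinalPresentable lam X →
        ∀ i, IsCardinalPresentable lam ((F i).obj X) := by
  intro ν
  have : Fact κ.IsRegular := ⟨hκ⟩
  have := hM.hasCardinalFilteredColimits
  obtain ⟨A, _, hAB, -, hAcolim⟩ := hB
  have (q : A × I) : ∃ ρ, IsCardinalPresentable ρ ((F q.2).obj q.1) :=
    (hpres q.1 (hAB q.1.2) q.2).imp fun _ => And.right
  choose ρ hρ using this
  obtain ⟨κ', hκ', hνκ', hρκ', hulls⟩ := Cardinal.exists_regular_hasCardinalFilteredHulls κ ρ ν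
  have : Fact κ'.IsRegular := ⟨hκ'⟩
  refine ⟨κ', hνκ', hκ', fun X hX hXpres i => ?_⟩
  obtain ⟨J, hJ, D, hDA, c, ⟨hc⟩, rfl⟩ := hAcolim X hX
  have := cardFiltered_iff_isCardinalFiltered.mp hJ
  have := (hF i).isCardinalAccessible
  have := isCardinalPresentable_iff.mp hXpres
  exact isCardinalPresentable_iff.mpr ((F i).isCardinalPresentable_obj_pt_of_isColimit hulls hc
    fun j => isCardinalPresentable_iff.mp ((hρ (⟨D.obj j, hDA j⟩, i)).of_le (hρκ' _)))

/-- Let `κ` be a regular cardinal, `M`, `N` categories admitting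
`κ`-filtered colimits and `(Fᵢ : M ⥤ N)` a set-indexed collection of functors preserving
`κ`-filtered colimits.  Let `B ⊆ M` be a full subcategory which is `κ`-preaccessible in `M`
and suppose that every `Fᵢ(X)` for `X ∈ B` is presentable in `N`.  Then there are
arbitrarily large regular cardinals `λ` such that for every object `X` of `B` which is
`λ`-presentable in `M`, `Fᵢ(X)` is `λ`-presentable in `N` for all `i`. -/
theorem statement10 {M : Type u} [Category.{v} M] {N : Type u₂} [Category.{v} N]
    (κ : Cardinal.{v}) (hκ : κ.IsRegular)
    (hM : HasCardFilteredColimits κ M) (hN : HasCardFilteredColimits κ N)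
    {I : Type v} (F : I → (M ⥤ N))
    (hF : ∀ i, PreservesCardFilteredColimits κ (F i))
    (B : Set M) (hB : PreaccessibleIn κ B)
    (hpres : ∀ X ∈ B, ∀ i, IsPresentableObj ((F i).obj X)) :
    ∀ ν : Cardinal.{v}, ∃ lam : Cardinal.{v}, ν ≤ lam ∧ lam.IsRegular ∧
      ∀ X ∈ B, IsCardinalPresentable lam X →
        ∀ i, IsCardinalPresentable lam ((F i).obj X) :=
  statement10_general κ hκ hM F hF B hB hpres

end Paper
end
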